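/- A positive squarefree integer d not divisible by 3 is representable as d = x² + 3y² with x, y ∈ ℤ if and only if every prime divisor of d is congruent to 1 modulo 3. -/

import Mathlib

/-!
Sufficiency: a prime `p ≡ 1 (mod 3)` has a cube root of unity `ω` mod `p` (Cauchy's theorem in
`(ZMod p)ˣ`), so `-3 = (2ω + 1)²` is a square mod `p`; hence `m p = T² + 3` with `0 < m < p`, and
Euler's descent lowers `m` to `1`. The form is multiplicative, and a squarefree `d` is the product
of its prime factors.

Necessity: if `p ∣ d = x² + 3y²` with `d` squarefree, then `p ∤ y` (else `p² ∣ d`), so `-3 = (x/y)²`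
mod `p`; `p ≠ 2` since `x² + 3y²` is never `2 mod 4`, and then `(x/y - 1)/2` is a primitive cube
root of unity mod `p`, so `3 ∣ p - 1`.
-/

open Polynomial in
theorem isPrimitiveRoot_three_iff {R : Type*} [CommRing R] [IsDomain R] [NeZero (3 : R)]
    {ω : R} : IsPrimitiveRoot ω 3 ↔ ω ^ 2 + ω + 1 = 0 := by
  have : NeZero ((3 : ℕ) : R) := by exact_mod_cast ‹NeZero (3 : R)›
  rw [← isRoot_cyclotomic_iff, cyclotomic_three]
  simp

theorem isSquare_neg_three_iff_exists_isPrimitiveRoot {F : Type*} [Field F] [NeZero (2 : F)]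
    [NeZero (3 : F)] : IsSquare (-3 : F) ↔ ∃ ω : F, IsPrimitiveRoot ω 3 := by
  simp only [isPrimitiveRoot_three_iff]
  constructor
  · rintro ⟨t, ht⟩
    refine ⟨(t - 1) / 2, ?_⟩
    field_simp
    linear_combination -ht
  · rintro ⟨ω, hω⟩
    exact ⟨2 * ω + 1, by linear_combination -4 * hω⟩

theorem ZMod.exists_isPrimitiveRoot_three_iff {p : ℕ} [Fact p.Prime] :
    (∃ ω : ZMod p, IsPrimitiveRoot ω 3) ↔ 3 ∣ p - 1 := by
  constructor
  · rintro ⟨ω, hω⟩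
    rw [hω.eq_orderOf]
    exact ZMod.orderOf_dvd_card_sub_one (hω.ne_zero (by norm_num))
  · intro h
    have : Fact (Nat.Prime 3) := ⟨Nat.prime_three⟩
    obtain ⟨u, hu⟩ := exists_prime_orderOf_dvd_card 3 (ZMod.card_units p ▸ h)
    exact ⟨u, IsPrimitiveRoot.coe_units_iff.mpr (hu ▸ IsPrimitiveRoot.orderOf u)⟩

theorem ZMod.natCast_ne_zero_of_prime_ne {p q : ℕ} [Fact p.Prime] (hq : q.Prime) (hqp : q ≠ p) :
    (q : ZMod p) ≠ 0 := by
  rw [Ne, ZMod.natCast_eq_zero_iff, Nat.prime_dvd_prime_iff_eq Fact.out hq]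
  exact hqp.symm

theorem ZMod.isSquare_neg_three_iff {p : ℕ} [Fact p.Prime] (hp2 : p ≠ 2) (hp3 : p ≠ 3) :
    IsSquare (-3 : ZMod p) ↔ p % 3 = 1 := by
  have : NeZero (2 : ZMod p) :=
    ⟨by exact_mod_cast ZMod.natCast_ne_zero_of_prime_ne Nat.prime_two hp2.symm⟩
  have : NeZero (3 : ZMod p) :=
    ⟨by exact_mod_cast ZMod.natCast_ne_zero_of_prime_ne Nat.prime_three hp3.symm⟩
  rw [isSquare_neg_three_iff_exists_isPrimitiveRoot, ZMod.exists_isPrimitiveRoot_three_iff]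
  have := (Fact.out : p.Prime).one_le
  omega

def IsSqAddThreeSq (n : ℤ) : Prop := ∃ x y : ℤ, n = x ^ 2 + 3 * y ^ 2

theorem IsSqAddThreeSq.one : IsSqAddThreeSq 1 := ⟨1, 0, by norm_num⟩

theorem IsSqAddThreeSq.mul {m n : ℤ} : IsSqAddThreeSq m → IsSqAddThreeSq n →
    IsSqAddThreeSq (m * n) := by
  rintro ⟨x, y, rfl⟩ ⟨u, v, rfl⟩
  exact ⟨x * u - 3 * y * v, x * v + y * u, by ring⟩

theorem Int.exists_dvd_sub_and_four_mul_sq_le (x : ℤ) {m : ℤ} (hm : 0 < m) :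
    ∃ a : ℤ, m ∣ x - a ∧ 4 * a ^ 2 ≤ m ^ 2 := by
  have h0 : 0 ≤ x % m := Int.emod_nonneg x hm.ne'
  have h1 : x % m < m := Int.emod_lt_of_pos x hm
  have hx : x % m + m * (x / m) = x := Int.emod_add_mul_ediv x m
  by_cases h : 2 * (x % m) ≤ m
  · exact ⟨x % m, ⟨x / m, by linarith⟩, by nlinarith⟩
  · exact ⟨x % m - m, ⟨x / m + 1, by linarith⟩, by nlinarith⟩

/-- Euler's identity `(xa + 3yb)² + 3(xb - ya)² = (x² + 3y²)(a² + 3b²)`, in which `m` divides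
both terms on the left. -/
theorem isSqAddThreeSq_mul_of_dvd_sub {m x y a b r n : ℤ} (hm : m ≠ 0) (hxa : m ∣ x - a)
    (hyb : m ∣ y - b) (hab : a ^ 2 + 3 * b ^ 2 = m * r) (hxy : x ^ 2 + 3 * y ^ 2 = m * n) :
    IsSqAddThreeSq (r * n) := by
  obtain ⟨s, hs⟩ := hxa
  obtain ⟨t, ht⟩ := hyb
  obtain ⟨X, hX⟩ : m ∣ x * a + 3 * y * b :=
    ⟨a * s + 3 * b * t + r, by linear_combination a * hs + 3 * b * ht + hab⟩
  obtain ⟨Y, hY⟩ : m ∣ x * b - y * a := ⟨s * b - t * a, by linear_combination b * hs - a * ht⟩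
  refine ⟨X, Y, mul_left_cancel₀ (pow_ne_zero 2 hm) ?_⟩
  linear_combination -(a ^ 2 + 3 * b ^ 2) * hxy - m * n * hab
    + (x * a + 3 * y * b + m * X) * hX + 3 * (x * b - y * a + m * Y) * hY

theorem sq_dvd_sq_add_three_mul_sq {m x y a b : ℤ} (hxa : m ∣ x - a) (hyb : m ∣ y - b)
    (ha : m ∣ 2 * a) (hb : m ∣ 2 * b) (hab : m ^ 2 ∣ a ^ 2 + 3 * b ^ 2) :
    m ^ 2 ∣ x ^ 2 + 3 * y ^ 2 := by
  obtain ⟨s, hs⟩ := hxa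
  obtain ⟨t, ht⟩ := hyb
  obtain ⟨u, hu⟩ := ha
  obtain ⟨v, hv⟩ := hb
  obtain ⟨w, hw⟩ := hab
  refine ⟨w + s * u + s ^ 2 + 3 * (t * v + t ^ 2), ?_⟩
  linear_combination (x + a + m * s) * hs + 3 * (y + b + m * t) * ht + hw + m * s * hu
    + 3 * m * t * hv

theorem Int.dvd_two_mul_of_four_mul_sq_eq {m a : ℤ} (h : 4 * a ^ 2 = m ^ 2) : m ∣ 2 * a := by
  rcases sq_eq_sq_iff_eq_or_eq_neg.mp (by linear_combination h : (2 * a) ^ 2 = m ^ 2) with h | h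
  <;> simp [h]

theorem IsSqAddThreeSq.exists_lt_of_mul_prime {m p : ℕ} (hp : p.Prime) (hm : 1 < m) (hmp : m < p)
    (h : IsSqAddThreeSq (m * p)) : ∃ r : ℕ, 0 < r ∧ r < m ∧ IsSqAddThreeSq (r * p) := by
  obtain ⟨x, y, hxy⟩ := h
  have hm0 : (0 : ℤ) < m := by omega
  obtain ⟨a, hxa, ha⟩ := Int.exists_dvd_sub_and_four_mul_sq_le x hm0
  obtain ⟨b, hyb, hb⟩ := Int.exists_dvd_sub_and_four_mul_sq_le y hm0
  obtain ⟨r, hr⟩ : (m : ℤ) ∣ a ^ 2 + 3 * b ^ 2 := by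
    have hdiff : a ^ 2 + 3 * b ^ 2 = m * p - ((x - a) * (x + a) + 3 * (y - b) * (y + b)) := by
      rw [hxy]; ring
    rw [hdiff]
    exact dvd_sub (dvd_mul_right _ _) (dvd_add (hxa.mul_right _) ((hyb.mul_left 3).mul_right _))
  have hr0 : 0 ≤ r := by nlinarith
  have hrm : r ≤ m := by nlinarith
  have hm_not_dvd : ¬ (m : ℤ) ^ 2 ∣ x ^ 2 + 3 * y ^ 2 := by
    rw [← hxy, sq, mul_dvd_mul_iff_left hm0.ne', Int.natCast_dvd_natCast]
    intro hdvd
    rcases hp.eq_one_or_self_of_dvd m hdvd with h | h <;> omega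
  lift r to ℕ using hr0
  -- `r = 0` and `r = m` are excluded because each would force `m² ∣ m p`.
  refine ⟨r, ?_, ?_, isSqAddThreeSq_mul_of_dvd_sub hm0.ne' hxa hyb hr hxy.symm⟩
  · refine Nat.pos_of_ne_zero ?_
    rintro rfl
    rw [Nat.cast_zero, mul_zero] at hr
    obtain ⟨rfl, rfl⟩ : a = 0 ∧ b = 0 := by
      constructor <;> nlinarith [sq_nonneg a, sq_nonneg b]
    exact hm_not_dvd (sq_dvd_sq_add_three_mul_sq hxa hyb (by simp) (by simp) (by simp))
  · refine lt_of_le_of_ne (by exact_mod_cast hrm) ?_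
    intro hrm_eq
    rw [hrm_eq] at hr
    have ha' : 4 * a ^ 2 = m ^ 2 := by nlinarith
    have hb' : 4 * b ^ 2 = m ^ 2 := by nlinarith
    exact hm_not_dvd (sq_dvd_sq_add_three_mul_sq hxa hyb (Int.dvd_two_mul_of_four_mul_sq_eq ha')
      (Int.dvd_two_mul_of_four_mul_sq_eq hb') ⟨1, by rw [hr]; ring⟩)

theorem IsSqAddThreeSq.of_mul_prime {p : ℕ} (hp : p.Prime) {m : ℕ} (hm : 0 < m) (hmp : m < p)
    (h : IsSqAddThreeSq (m * p)) : IsSqAddThreeSq p := by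
  induction m using Nat.strong_induction_on with
  | _ m ih =>
    rcases (Nat.succ_le_of_lt hm).lt_or_eq with hm1 | rfl
    · obtain ⟨r, hr0, hrm, hr⟩ := h.exists_lt_of_mul_prime hp hm1 hmp
      exact ih r hrm hr0 (hrm.trans hmp) hr
    · simpa using h

theorem isSqAddThreeSq_of_prime_of_isSquare_neg_three {p : ℕ} (hp : p.Prime) (hp2 : p ≠ 2)
    (h : IsSquare (-3 : ZMod p)) : IsSqAddThreeSq p := by
  obtain ⟨t, ht⟩ := h
  obtain ⟨z, rfl⟩ := ZMod.intCast_surjective t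
  have hp0 : (0 : ℤ) < p := by exact_mod_cast hp.pos
  obtain ⟨T, hzT, hT⟩ := Int.exists_dvd_sub_and_four_mul_sq_le z hp0
  obtain ⟨m, hm⟩ : (p : ℤ) ∣ T ^ 2 + 3 := by
    rw [← ZMod.intCast_zmod_eq_zero_iff_dvd]
    push_cast
    rw [(ZMod.intCast_eq_intCast_iff_dvd_sub T z p).mpr hzT]
    linear_combination -ht
  have hp_ge : (3 : ℤ) ≤ p := by have := hp.two_le; omega
  have hm0 : 0 < m := by nlinarith
  have hmp : m < p := by nlinarith
  lift m to ℕ using hm0.le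
  exact .of_mul_prime hp (by exact_mod_cast hm0) (by exact_mod_cast hmp)
    ⟨T, 1, by rw [mul_comm, ← hm]; ring⟩

theorem isSqAddThreeSq_of_prime_of_mod_three_eq_one {p : ℕ} (hp : p.Prime) (h : p % 3 = 1) :
    IsSqAddThreeSq p := by
  have : Fact p.Prime := ⟨hp⟩
  have hp2 : p ≠ 2 := by rintro rfl; simp at h
  have hp3 : p ≠ 3 := by rintro rfl; simp at h
  exact isSqAddThreeSq_of_prime_of_isSquare_neg_three hp hp2
    ((ZMod.isSquare_neg_three_iff hp2 hp3).mpr h)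

theorem Int.four_dvd_sq_add_three_mul_sq_of_two_dvd {x y : ℤ} (h : 2 ∣ x ^ 2 + 3 * y ^ 2) :
    4 ∣ x ^ 2 + 3 * y ^ 2 := by
  have hmod : (x ^ 2 + 3 * y ^ 2) % 4 ≠ 2 := by
    intro h2
    have hcast := (ZMod.intCast_eq_intCast_iff' (x ^ 2 + 3 * y ^ 2) 2 4).mpr h2
    push_cast at hcast
    generalize (x : ZMod 4) = a, (y : ZMod 4) = b at hcast
    revert a b
    decide
  omega

theorem isSquare_neg_three_of_dvd_sq_add_three_mul_sq {p : ℕ} [Fact p.Prime] {x y : ℤ}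
    (h : (p : ℤ) ∣ x ^ 2 + 3 * y ^ 2) (hy : ¬ (p : ℤ) ∣ y) : IsSquare (-3 : ZMod p) := by
  rw [← ZMod.intCast_zmod_eq_zero_iff_dvd] at h hy
  push_cast at h
  refine ⟨x / y, ?_⟩
  field_simp
  linear_combination -h

theorem mod_three_eq_one_of_prime_dvd_of_squarefree {p : ℕ} (hp : p.Prime) (hp3 : p ≠ 3)
    {x y : ℤ} (hsf : Squarefree (x ^ 2 + 3 * y ^ 2)) (hpd : (p : ℤ) ∣ x ^ 2 + 3 * y ^ 2) :
    p % 3 = 1 := by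
  have : Fact p.Prime := ⟨hp⟩
  have hp_not_unit : ¬ IsUnit (p : ℤ) := by
    rw [Int.isUnit_iff]; have := hp.two_le; omega
  have hp2 : p ≠ 2 := by
    rintro rfl
    exact hp_not_unit (hsf 2 (Int.four_dvd_sq_add_three_mul_sq_of_two_dvd hpd))
  have hy : ¬ (p : ℤ) ∣ y := by
    intro hy
    have hx : (p : ℤ) ∣ x := by
      refine (Nat.prime_iff_prime_int.mp hp).dvd_of_dvd_pow (n := 2) ?_
      simpa using dvd_sub hpd ((hy.pow two_ne_zero).mul_left 3)
    obtain ⟨u, rfl⟩ := hx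
    obtain ⟨v, rfl⟩ := hy
    exact hp_not_unit (hsf p ⟨u ^ 2 + 3 * v ^ 2, by ring⟩)
  exact (ZMod.isSquare_neg_three_iff hp2 hp3).mp
    (isSquare_neg_three_of_dvd_sq_add_three_mul_sq hpd hy)

theorem stmt_13 (d : ℕ) (hsf : Squarefree d) (h3 : ¬ 3 ∣ d) :
    (∃ x y : ℤ, (d : ℤ) = x ^ 2 + 3 * y ^ 2) ↔
      ∀ p : ℕ, p.Prime → p ∣ d → p % 3 = 1 := by
  constructor
  · rintro ⟨x, y, hxy⟩ p hp hpd
    have hsf' : Squarefree (x ^ 2 + 3 * y ^ 2) := hxy ▸ Int.squarefree_natCast.mpr hsf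
    exact mod_three_eq_one_of_prime_dvd_of_squarefree hp (by rintro rfl; exact h3 hpd) hsf'
      (hxy ▸ Int.natCast_dvd_natCast.mpr hpd)
  · intro hall
    rw [← Nat.prod_primeFactors_of_squarefree hsf, Nat.cast_prod]
    refine Finset.prod_induction _ IsSqAddThreeSq (fun _ _ => IsSqAddThreeSq.mul)
      IsSqAddThreeSq.one fun p hp => ?_
    have hp' := Nat.prime_of_mem_primeFactors hp
    exact isSqAddThreeSq_of_prime_of_mod_three_eq_one hp'
      (hall p hp' (Nat.dvd_of_mem_primeFactors hp))
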